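/- Let d ∈ ℕ and let f : [0,1]^{d+1} → ℝ be a bounded measurable function (so that all horizontal slices f(·,t_{d+1}) lie in L_2([0,1]^d)). Then ‖f | 𝒟_0^{d+1}‖ ≤ sup_{t_{d+1} ∈ [0,1]} ‖f(·,t_{d+1}) | 𝒟_0^d‖. -/

import Mathlib

open MeasureTheory
open scoped ENNReal

noncomputable section

/-- The closed unit cube `[0,1]^d`. -/
def unitCube (d : ℕ) : Set (Fin d → ℝ) := Set.univ.pi fun _ => Set.Icc (0:ℝ) 1

/-- The half-open unit cube `[0,1)^d`. -/
def unitCubeIco (d : ℕ) : Set (Fin d → ℝ) := Set.univ.pi fun _ => Set.Ico (0:ℝ) 1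

/-- Discrepancy function of the first `N` points of the sequence `S` in `[0,1)^d`. -/
def discSeq (d : ℕ) (S : ℕ → Fin d → ℝ) (N : ℕ) (x : Fin d → ℝ) : ℝ :=
  (Nat.card {k : Fin N // ∀ i, S k i < x i} : ℝ) / N - ∏ i, x i

/-- One-dimensional Haar function `h_{j,m}`, with `h_{-1,0} = 1_{[0,1)}`. -/
def haar1 (j : ℤ) (m : ℕ) (x : ℝ) : ℝ :=
  if j = -1 then (if 0 ≤ x ∧ x < 1 then 1 else 0)
  else if (m:ℝ)/2^j.toNat ≤ x ∧ x < ((m:ℝ) + 1/2)/2^j.toNat then 1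
  else if ((m:ℝ) + 1/2)/2^j.toNat ≤ x ∧ x < ((m:ℝ)+1)/2^j.toNat then -1
  else 0

/-- `d`-dimensional (tensor product) Haar function. -/
def haarFn (d : ℕ) (j : Fin d → ℤ) (m : Fin d → ℕ) (x : Fin d → ℝ) : ℝ :=
  ∏ i, haar1 (j i) (m i) (x i)

/-- Haar coefficient `⟨f, h_{j,m}⟩`. -/
def haarCoeff (d : ℕ) (f : (Fin d → ℝ) → ℝ) (j : Fin d → ℤ) (m : Fin d → ℕ) : ℝ :=
  ∫ x in unitCube d, f x * haarFn d j m x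

/-- `|j| = max(j₁,0) + ⋯ + max(j_d,0)`. -/
def jnorm (d : ℕ) (j : Fin d → ℤ) : ℕ := ∑ i, (j i).toNat

/-- One-dimensional dyadic interval `I_{j,m}`. -/
def dyadicI (j : ℤ) (m : ℕ) : Set ℝ :=
  Set.Ico ((m:ℝ)/2^j.toNat) (((m:ℝ)+1)/2^j.toNat)

/-- `d`-dimensional dyadic box `I_{j,m}`. -/
def dyadicBox (d : ℕ) (j : Fin d → ℤ) (m : Fin d → ℕ) : Set (Fin d → ℝ) :=
  Set.univ.pi fun i => dyadicI (j i) (m i)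

/-- The index set `𝔻_j` as a finset. -/
def Dfin (d : ℕ) (j : Fin d → ℤ) : Finset (Fin d → ℕ) :=
  Fintype.piFinset fun i => Finset.range (2 ^ (j i).toNat)

/-- The index set `𝔻_j` for `j ∈ ℕ₀^d`. -/
def Dfin0 (d : ℕ) (j : Fin d → ℕ) : Finset (Fin d → ℕ) :=
  Fintype.piFinset fun i => Finset.range (2 ^ (j i))

/-- Coordinate of the `k`-th point of a digital sequence over `𝔽₂` with generating
matrix `C` (`0`-based rows and columns). -/
def digitalCoord (C : ℕ → ℕ → ZMod 2) (k : ℕ) : ℝ :=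
  ∑' i : ℕ,
    (((∑ ℓ ∈ Finset.range (k+1), C i ℓ * (if k.testBit ℓ then 1 else 0)).val : ℕ) : ℝ) / 2 ^ (i + 1)

/-- The digital sequence over `𝔽₂` generated by matrices `C 0, …, C (d-1)`. -/
def digitalSeq (d : ℕ) (C : Fin d → ℕ → ℕ → ZMod 2) : ℕ → Fin d → ℝ :=
  fun k j => digitalCoord (C j) k

/-- `C 0, …, C (d-1)` generate an order `α` digital `(t,n,d)`-net over `𝔽₂`,
where the relevant submatrices have `q` rows (`q ≥ αn`) and `n` columns.
Row indices are `0`-based; the `1`-based row value of row `r` is `r+1`. -/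
def IsOrderNet (α n t q d : ℕ) (C : Fin d → ℕ → ℕ → ZMod 2) : Prop :=
  ∀ (ν : Fin d → ℕ) (r : ∀ j : Fin d, Fin (ν j) → ℕ),
    (∀ j, StrictAnti (r j)) →
    (∀ j l, r j l < q) →
    (∑ j, ∑ l ∈ Finset.univ.filter (fun l : Fin (ν j) => (l:ℕ) < α), (r j l + 1)) ≤ α * n - t →
    LinearIndependent (ZMod 2)
      (fun p : Σ j : Fin d, Fin (ν j) => fun col : Fin n => C p.1 (r p.1 p.2) col)

/-- `C 0, …, C (d-1)` generate an order `α` digital `(t,d)`-sequence over `𝔽₂`. -/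
def IsOrderSeq (α t d : ℕ) (C : Fin d → ℕ → ℕ → ZMod 2) : Prop :=
  ∀ n : ℕ, t < α * n → IsOrderNet α n t (α * n) d C

/-- The condition `e_{i,k,ℓ} = 0` for all `k > 2ℓ` (in `1`-based indexing). -/
def Triangular2 (d : ℕ) (E : Fin d → ℕ → ℕ → ZMod 2) : Prop :=
  ∀ i k ℓ, 2 * (ℓ + 1) < k + 1 → E i k ℓ = 0

open scoped Classical in
/-- The quantity `λ(U)⁻¹ ∑_{j ∈ ℕ₀^d} 2^{|j|} ∑_{m : I_{j,m} ⊆ U} ⟨f,h_{j,m}⟩²`. -/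
def bmoSq (d : ℕ) (f : (Fin d → ℝ) → ℝ) (U : Set (Fin d → ℝ)) : ℝ≥0∞ :=
  (volume U)⁻¹ * ∑' j : Fin d → ℕ, ∑ m ∈ Dfin0 d j,
    if dyadicBox d (fun i => (j i : ℤ)) m ⊆ U then
      (2:ℝ≥0∞) ^ (∑ i, j i) * ENNReal.ofReal ((haarCoeff d f (fun i => (j i : ℤ)) m)^2)
    else 0

/-- The BMO (semi-)norm `‖f | bmo^d‖`. -/
def bmoNorm (d : ℕ) (f : (Fin d → ℝ) → ℝ) : ℝ≥0∞ :=
  (⨆ U : {U : Set (Fin d → ℝ) // MeasurableSet U ∧ U ⊆ unitCubeIco d ∧ 0 < volume U},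
    bmoSq d f U.1) ^ (1/2 : ℝ)

/-- The Orlicz norm of `f` on `[0,1)^d` with respect to the Young function `ψ`,
with the convention `inf ∅ = ∞`. -/
def orliczNorm (d : ℕ) (ψ : ℝ → ℝ) (f : (Fin d → ℝ) → ℝ) : ℝ≥0∞ :=
  ⨅ K : {K : ℝ // 0 < K ∧ ∫ x in unitCubeIco d, ψ (|f x| / K) ≤ 1}, ENNReal.ofReal K.1

/-- `ψ` is a Young function which coincides with `exp(x^β) - 1` for all large `x`. -/
def IsYoungExp (β : ℝ) (ψ : ℝ → ℝ) : Prop :=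
  ConvexOn ℝ (Set.Ici 0) ψ ∧ ψ 0 = 0 ∧ (∀ x : ℝ, 0 < x → 0 < ψ x) ∧
    ∃ x₀ : ℝ, ∀ x ≥ x₀, ψ x = Real.exp (x ^ β) - 1

/-- The set of valid Haar indices `j ∈ ℕ_{-1}^d`. -/
def validJ (d : ℕ) : Set (Fin d → ℤ) := {j | ∀ i, -1 ≤ j i}

/-- The `q`-th power of the Haar-characterization of the `S^s_{p,q}B` norm:
`∑_{j ∈ ℕ_{-1}^d} 2^{|j|(s-1/p+1)q} (∑_{m ∈ 𝔻_j} |⟨f,h_{j,m}⟩|^p)^{q/p}`. -/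
def besovSum (d : ℕ) (p q s : ℝ) (f : (Fin d → ℝ) → ℝ) : ℝ≥0∞ :=
  ∑' j : validJ d,
    ENNReal.ofReal ((2:ℝ) ^ ((jnorm d j.1 : ℝ) * (s - 1/p + 1) * q) *
      (∑ m ∈ Dfin d j.1, |haarCoeff d f j.1 m| ^ p) ^ (q / p))

/-- Coordinate of the `k`-th point of a digital net with `q × n` generating matrix `C`. -/
def netCoord (q n : ℕ) (C : ℕ → ℕ → ZMod 2) (k : ℕ) : ℝ :=
  ∑ i ∈ Finset.range q,
    ((∑ ℓ ∈ Finset.range n, C i ℓ * (if k.testBit ℓ then 1 else 0)).val : ℝ) / 2 ^ (i + 1)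

/-- `n_{μ+1}`, with the convention `n_{r+1} = log₂ N` (indices `1`-based, `n` stored `0`-based). -/
def nExt (r : ℕ) (n : Fin r → ℕ) (N : ℕ) (μ : ℕ) : ℝ :=
  if h : μ < r then (n ⟨μ, h⟩ : ℝ) else Real.logb 2 N

/-- `n_μ`, with the convention `n_0 = 0` (indices `1`-based, `n` stored `0`-based). -/
def nPrev (r : ℕ) (n : Fin r → ℕ) (μ : ℕ) : ℝ :=
  if h : 1 ≤ μ ∧ μ ≤ r then (n ⟨μ - 1, by omega⟩ : ℝ) else 0

/-- The dyadic square function `Sf`, valued in `ℝ≥0∞`. -/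
def sqFnE (d : ℕ) (f : (Fin d → ℝ) → ℝ) (x : Fin d → ℝ) : ℝ≥0∞ :=
  (∑' j : validJ d, ∑ m ∈ Dfin d j.1,
    ENNReal.ofReal ((2:ℝ) ^ (2 * jnorm d j.1) * (haarCoeff d f j.1 m)^2 *
      (dyadicBox d j.1 m).indicator (fun _ => (1:ℝ)) x)) ^ (1/2 : ℝ)

/-- `sup_{p > 1} p^{-1/β} ‖f‖_{L_p([0,1]^d)}`. -/
def supLp (d : ℕ) (β : ℝ) (f : (Fin d → ℝ) → ℝ) : ℝ≥0∞ :=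
  ⨆ p : {p : ℝ // 1 < p},
    ENNReal.ofReal ((p:ℝ) ^ (-(1/β))) * eLpNorm f (ENNReal.ofReal (p:ℝ)) (volume.restrict (unitCube d))

/-- `‖f | 𝒟₀^d‖² = ∑_{j ∈ ℕ₀^d} 2^{|j|} ∑_{m ∈ 𝔻_j} ⟨f,h_{j,m}⟩²`. -/
def dNormSq (d : ℕ) (f : (Fin d → ℝ) → ℝ) : ℝ≥0∞ :=
  ∑' j : Fin d → ℕ, ∑ m ∈ Dfin0 d j,
    ENNReal.ofReal ((2:ℝ) ^ (∑ i, j i) * (haarCoeff d f (fun i => (j i : ℤ)) m)^2)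

/-- `‖f | 𝒟₀^d‖`. -/
def dNorm (d : ℕ) (f : (Fin d → ℝ) → ℝ) : ℝ≥0∞ := (dNormSq d f) ^ (1/2 : ℝ)

/-!
Write a point of `[0,1]^{d+1}` as `(y, t)`. By Fubini, the Haar coefficient of `f` with index
`((j, k), (m, n))` is the one-dimensional Haar coefficient `⟨c_{j,m}, h_{k,n}⟩` of the slice
coefficient `c_{j,m}(t) = ⟨f(·,t), h_{j,m}⟩`. The functions `2^{k/2} h_{k,n}`, `k ≥ 0`, are
orthonormal in `L₂[0,1]`, so Bessel's inequality gives
`∑_{k,n} 2^k ⟨c_{j,m}, h_{k,n}⟩² ≤ ∫ c_{j,m}²`. Summing with the weights `2^{|j|}` yields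
`‖f | 𝒟₀^{d+1}‖² ≤ ∫₀¹ ‖f(·,t) | 𝒟₀^d‖² dt`, and the integrand is at most the squared supremum.
-/

open Set

theorem mem_dyadicI_iff (j m : ℕ) (x : ℝ) : x ∈ dyadicI j m ↔ ⌊2 ^ j * x⌋ = m := by
  rw [Int.floor_eq_iff, dyadicI, mem_Ico, Int.toNat_natCast, div_le_iff₀' (by positivity),
    lt_div_iff₀' (by positivity)]
  push_cast; rfl

theorem floor_two_pow_mul_eq_div (j k : ℕ) (x : ℝ) : ⌊2 ^ j * x⌋ = ⌊2 ^ (j + k) * x⌋ / 2 ^ k := by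
  have h := Int.floor_div_natCast (2 ^ (j + k) * x) (2 ^ k)
  push_cast at h
  rw [← h, pow_add, mul_right_comm, mul_div_cancel_right₀ _ (by positivity)]

theorem haar1_natCast_eq_ite (j m : ℕ) (x : ℝ) :
    haar1 j m x =
      if ⌊2 ^ (j + 1) * x⌋ = 2 * m then 1 else if ⌊2 ^ (j + 1) * x⌋ = 2 * m + 1 then -1 else 0 := by
  have hj : (j : ℤ) ≠ -1 := by omega
  have h2 : (2 : ℝ) ^ (j + 1) * x = 2 * (2 ^ j * x) := by ring
  have hpos : (0 : ℝ) < 2 ^ j := by positivity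
  simp only [haar1, hj, if_false, Int.toNat_natCast, div_le_iff₀' hpos, lt_div_iff₀' hpos,
    Int.floor_eq_iff, h2]
  push_cast
  refine if_congr ?_ rfl (if_congr ?_ rfl rfl) <;>
    constructor <;> rintro ⟨_, _⟩ <;> constructor <;> linarith

theorem measurable_haar1 (j : ℤ) (m : ℕ) : Measurable (haar1 j m) := by
  unfold haar1
  split_ifs
  · exact Measurable.ite measurableSet_Ico measurable_const measurable_const
  · exact Measurable.ite measurableSet_Ico measurable_const
      (Measurable.ite measurableSet_Ico measurable_const measurable_const)

theorem abs_haar1_le_one (j : ℤ) (m : ℕ) (x : ℝ) : |haar1 j m x| ≤ 1 := by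
  unfold haar1; split_ifs <;> norm_num

theorem measurableSet_dyadicI (j : ℤ) (m : ℕ) : MeasurableSet (dyadicI j m) := measurableSet_Ico

theorem haar1_eq_zero_of_floor_ne {j m : ℕ} {x : ℝ} (hx : ⌊2 ^ j * x⌋ ≠ m) : haar1 j m x = 0 := by
  have := floor_two_pow_mul_eq_div j 1 x
  rw [haar1_natCast_eq_ite]
  split_ifs <;> first | rfl | omega

theorem haar1_mul_self (j m : ℕ) (x : ℝ) :
    haar1 j m x * haar1 j m x = (dyadicI j m).indicator 1 x := by
  classical
  rw [haar1_natCast_eq_ite, indicator_apply, Pi.one_apply, mem_dyadicI_iff,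
    floor_two_pow_mul_eq_div j 1]
  split_ifs <;> first | omega | norm_num

theorem haar1_mul_haar1_of_ne {j m m' : ℕ} (h : m ≠ m') (x : ℝ) :
    haar1 j m x * haar1 j m' x = 0 := by
  rw [haar1_natCast_eq_ite, haar1_natCast_eq_ite]
  split_ifs <;> first | omega | norm_num

theorem haar1_eq_of_floor_eq {j j' m : ℕ} (h : j < j') {x y : ℝ}
    (hxy : ⌊2 ^ j' * x⌋ = ⌊2 ^ j' * y⌋) :
    haar1 j m x = haar1 j m y := by
  obtain ⟨k, rfl⟩ := Nat.exists_eq_add_of_le h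
  rw [haar1_natCast_eq_ite, haar1_natCast_eq_ite, floor_two_pow_mul_eq_div (j + 1) k x,
    floor_two_pow_mul_eq_div (j + 1) k y, hxy]

-- `h_{j,m}` is constant on `I_{j',m'}`, whose left endpoint is `m' / 2^j'`.
theorem haar1_mul_haar1_of_lt {j j' : ℕ} (h : j < j') (m m' : ℕ) (x : ℝ) :
    haar1 j m x * haar1 j' m' x = haar1 j m (m' / 2 ^ j') * haar1 j' m' x := by
  by_cases hx : ⌊2 ^ j' * x⌋ = m'
  · have hy : ⌊2 ^ j' * (m' / 2 ^ j' : ℝ)⌋ = m' := by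
      rw [mul_div_cancel₀ _ (by positivity)]
      simp
    rw [haar1_eq_of_floor_eq h (hx.trans hy.symm)]
  · rw [haar1_eq_zero_of_floor_ne hx, mul_zero, mul_zero]

theorem setIntegral_indicator_dyadicI {j m : ℕ} (hm : m < 2 ^ j) :
    ∫ x in Icc (0:ℝ) 1, (dyadicI j m).indicator 1 x = (2 ^ j : ℝ)⁻¹ := by
  have hpos : (0 : ℝ) < 2 ^ j := by positivity
  have hm' : (m : ℝ) + 1 ≤ 2 ^ j := by exact_mod_cast hm
  have hsub : dyadicI j m ⊆ Icc 0 1 := fun x hx => by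
    rw [dyadicI, Int.toNat_natCast, mem_Ico, div_le_iff₀ hpos, lt_div_iff₀ hpos] at hx
    constructor <;> nlinarith
  rw [setIntegral_indicator (measurableSet_dyadicI _ _), inter_eq_self_of_subset_right hsub,
    dyadicI, Int.toNat_natCast]
  simp only [Pi.one_apply, setIntegral_const, smul_eq_mul, mul_one, measureReal_def,
    Real.volume_Ico]
  rw [ENNReal.toReal_ofReal (by rw [sub_nonneg]; gcongr; linarith)]
  field_simp
  ring

theorem haar1_natCast_eq_indicator_sub (j m : ℕ) :
    haar1 j m = (dyadicI (j + 1 : ℕ) (2 * m)).indicator 1 -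
      (dyadicI (j + 1 : ℕ) (2 * m + 1)).indicator 1 := by
  classical
  ext x
  rw [haar1_natCast_eq_ite, Pi.sub_apply, indicator_apply, indicator_apply, mem_dyadicI_iff,
    mem_dyadicI_iff]
  push_cast
  split_ifs <;> first | omega | norm_num

theorem setIntegral_haar1 {j m : ℕ} (hm : m < 2 ^ j) : ∫ x in Icc (0:ℝ) 1, haar1 j m x = 0 := by
  have hI : ∀ n : ℕ, Integrable ((dyadicI (j + 1 : ℕ) n).indicator (1 : ℝ → ℝ))
      (volume.restrict (Icc 0 1)) :=
    fun n => (integrable_const 1).indicator (measurableSet_dyadicI _ _)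
  simp only [haar1_natCast_eq_indicator_sub, Pi.sub_apply]
  rw [integral_sub (hI _) (hI _), setIntegral_indicator_dyadicI, setIntegral_indicator_dyadicI,
    sub_self] <;> omega

theorem setIntegral_haar1_mul_haar1 {j j' m m' : ℕ} (hm : m < 2 ^ j) (hm' : m' < 2 ^ j') :
    ∫ x in Icc (0:ℝ) 1, haar1 j m x * haar1 j' m' x =
      if (j, m) = (j', m') then (2 ^ j : ℝ)⁻¹ else 0 := by
  rcases lt_trichotomy j j' with h | rfl | h
  · simp_rw [haar1_mul_haar1_of_lt h, integral_const_mul, setIntegral_haar1 hm', mul_zero,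
      Prod.mk.injEq, h.ne, false_and, if_false]
  · by_cases hmm : m = m'
    · simp [hmm, haar1_mul_self, setIntegral_indicator_dyadicI hm']
    · simp [hmm, haar1_mul_haar1_of_ne hmm]
  · simp_rw [mul_comm (haar1 j m _), haar1_mul_haar1_of_lt h, integral_const_mul,
      setIntegral_haar1 hm, mul_zero, Prod.mk.injEq, h.ne', false_and, if_false]

theorem memLp_haar1 {μ : Measure ℝ} [IsFiniteMeasure μ] (j : ℤ) (m : ℕ) (p : ℝ≥0∞) :
    MemLp (haar1 j m) p μ :=
  MemLp.of_bound (measurable_haar1 j m).aestronglyMeasurable 1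
    (ae_of_all _ fun x => by simpa using abs_haar1_le_one j m x)

theorem inner_toLp_toLp {α : Type*} [MeasurableSpace α] {μ : Measure α} {u v : α → ℝ}
    (hu : MemLp u 2 μ) (hv : MemLp v 2 μ) :
    inner ℝ (hu.toLp u) (hv.toLp v) = ∫ x, u x * v x ∂μ := by
  rw [L2.inner_def]
  refine integral_congr_ae ?_
  filter_upwards [hu.coeFn_toLp, hv.coeFn_toLp] with x hux hvx
  rw [hux, hvx, real_inner_eq_re_inner, RCLike.inner_apply]
  simp [mul_comm]

def normalizedHaarLp (p : Σ j : ℕ, Fin (2 ^ j)) : Lp ℝ 2 (volume.restrict (Icc (0:ℝ) 1)) :=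
  ((memLp_haar1 p.1 p.2 2).const_mul (√(2 ^ p.1))).toLp _

theorem orthonormal_normalizedHaarLp : Orthonormal ℝ normalizedHaarLp := by
  rw [orthonormal_iff_ite]
  rintro ⟨j, m⟩ ⟨j', m'⟩
  have hsplit : ∀ x, √(2 ^ j) * haar1 j m x * (√(2 ^ j') * haar1 j' m' x) =
      √(2 ^ j) * √(2 ^ j') * (haar1 j m x * haar1 j' m' x) := fun x => by ring
  simp_rw [normalizedHaarLp, inner_toLp_toLp, hsplit, integral_const_mul,
    setIntegral_haar1_mul_haar1 m.2 m'.2]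
  by_cases h : (j, (m : ℕ)) = (j', (m' : ℕ))
  · obtain ⟨rfl, hm⟩ := Prod.mk.inj h
    obtain rfl := Fin.ext hm
    rw [if_pos rfl, if_pos rfl, Real.mul_self_sqrt (by positivity), mul_inv_cancel₀ (by positivity)]
  · rw [if_neg h, mul_zero, if_neg]
    rintro ⟨⟩
    exact h rfl

theorem tsum_haarCoeff_sq_le {g : ℝ → ℝ} (hg : MemLp g 2 (volume.restrict (Icc (0:ℝ) 1))) :
    ∑' j : ℕ, ∑ m ∈ Finset.range (2 ^ j),
        ENNReal.ofReal (2 ^ j * (∫ t in Icc (0:ℝ) 1, g t * haar1 j m t) ^ 2) ≤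
      ∫⁻ t in Icc (0:ℝ) 1, ENNReal.ofReal (g t ^ 2) := by
  set G := hg.toLp g
  have hcoeff : ∀ p : Σ j : ℕ, Fin (2 ^ j), ‖inner ℝ (normalizedHaarLp p) G‖ ^ 2 =
      2 ^ p.1 * (∫ t in Icc (0:ℝ) 1, g t * haar1 p.1 p.2 t) ^ 2 := by
    rintro ⟨j, m⟩
    simp_rw [normalizedHaarLp, G, inner_toLp_toLp, Real.norm_eq_abs, sq_abs, mul_assoc,
      integral_const_mul, mul_pow, Real.sq_sqrt (by positivity : (0:ℝ) ≤ 2 ^ j), mul_comm]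
  calc ∑' j : ℕ, ∑ m ∈ Finset.range (2 ^ j),
          ENNReal.ofReal (2 ^ j * (∫ t in Icc (0:ℝ) 1, g t * haar1 j m t) ^ 2)
      = ∑' p, ENNReal.ofReal (‖inner ℝ (normalizedHaarLp p) G‖ ^ 2) := by
        rw [ENNReal.tsum_sigma']
        refine tsum_congr fun j => ?_
        rw [tsum_fintype, ← Fin.sum_univ_eq_sum_range]
        exact Finset.sum_congr rfl fun m _ => congrArg _ (hcoeff ⟨j, m⟩).symm
    _ = ENNReal.ofReal (∑' p, ‖inner ℝ (normalizedHaarLp p) G‖ ^ 2) :=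
        (ENNReal.ofReal_tsum_of_nonneg (fun _ => by positivity)
          (orthonormal_normalizedHaarLp.inner_products_summable G)).symm
    _ ≤ ENNReal.ofReal (‖G‖ ^ 2) :=
        ENNReal.ofReal_le_ofReal (orthonormal_normalizedHaarLp.tsum_inner_products_le G)
    _ = ∫⁻ t in Icc (0:ℝ) 1, ENNReal.ofReal (g t ^ 2) := by
        rw [← real_inner_self_eq_norm_sq, inner_toLp_toLp, ← ofReal_integral_eq_lintegral_ofReal
          hg.integrable_sq (ae_of_all _ fun _ => sq_nonneg _)]
        simp_rw [sq]

instance : IsProbabilityMeasure (volume.restrict (Icc (0:ℝ) 1)) := ⟨by simp⟩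

theorem volume_restrict_unitCube (d : ℕ) :
    volume.restrict (unitCube d) = Measure.pi fun _ => volume.restrict (Icc (0:ℝ) 1) := by
  rw [unitCube, volume_pi, Measure.restrict_pi_pi]

theorem measurable_haarFn (d : ℕ) (j : Fin d → ℤ) (m : Fin d → ℕ) : Measurable (haarFn d j m) :=
  Finset.measurable_prod _ fun i _ => (measurable_haar1 _ _).comp (measurable_pi_apply i)

theorem abs_mul_haarFn_le {d : ℕ} {f : (Fin d → ℝ) → ℝ} {B : ℝ} (hB : ∀ x, |f x| ≤ B)
    (j : Fin d → ℤ) (m : Fin d → ℕ) (x : Fin d → ℝ) : |f x * haarFn d j m x| ≤ B := by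
  have hprod : |haarFn d j m x| ≤ 1 := by
    rw [haarFn, Finset.abs_prod]
    exact Finset.prod_le_one (fun _ _ => abs_nonneg _) fun _ _ => abs_haar1_le_one _ _ _
  rw [abs_mul]
  exact (mul_le_of_le_one_right (abs_nonneg _) hprod).trans (hB x)

theorem abs_haarCoeff_le {d : ℕ} {f : (Fin d → ℝ) → ℝ} {B : ℝ} (hB : ∀ x, |f x| ≤ B)
    (j : Fin d → ℤ) (m : Fin d → ℕ) : |haarCoeff d f j m| ≤ B := by
  rw [haarCoeff, volume_restrict_unitCube]
  simpa using norm_integral_le_of_norm_le_const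
    (μ := Measure.pi fun _ => volume.restrict (Icc (0:ℝ) 1)) (ae_of_all _ fun x =>
    (Real.norm_eq_abs _).trans_le (abs_mul_haarFn_le hB j m x))

theorem Fintype.sum_piFinset_succ {n : ℕ} {α M : Type*} [AddCommMonoid M]
    (S : Fin (n + 1) → Finset α) (F : (Fin (n + 1) → α) → M) :
    ∑ x ∈ Fintype.piFinset S, F x =
      ∑ a ∈ S (Fin.last n), ∑ x ∈ Fintype.piFinset (fun i => S i.castSucc), F (Fin.snoc x a) := by
  have h := Finset.filter_piFinset_eq_map_snocEquiv S (fun _ => True)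
  simp only [Finset.filter_true] at h
  rw [h, Finset.sum_map, Finset.sum_product]
  rfl

section Slice

variable {d : ℕ} {f : (Fin (d + 1) → ℝ) → ℝ}

theorem haarCoeff_succ (hf : Measurable f) {B : ℝ} (hB : ∀ x, |f x| ≤ B)
    (j : Fin (d + 1) → ℤ) (m : Fin (d + 1) → ℕ) :
    haarCoeff (d + 1) f j m = ∫ t in Icc (0:ℝ) 1,
      haarCoeff d (fun y => f (Fin.snoc y t)) (Fin.init j) (Fin.init m) *
        haar1 (j (Fin.last d)) (m (Fin.last d)) t := by
  set μI := volume.restrict (Icc (0:ℝ) 1)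
  set e := MeasurableEquiv.piFinSuccAbove (fun _ : Fin (d + 1) => ℝ) (Fin.last d)
  have he : MeasurePreserving e (Measure.pi fun _ => μI) (μI.prod (Measure.pi fun _ => μI)) :=
    measurePreserving_piFinSuccAbove (fun _ => μI) (Fin.last d)
  have hsymm : ∀ t y, e.symm (t, y) = Fin.snoc y t := fun t y => Fin.insertNth_last' t y
  set F := fun x => f x * haarFn (d + 1) j m x
  have hF : ∀ t y, F (Fin.snoc y t) =
      f (Fin.snoc y t) * haarFn d (Fin.init j) (Fin.init m) y *
        haar1 (j (Fin.last d)) (m (Fin.last d)) t := by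
    intro t y
    simp only [F, haarFn, Fin.prod_univ_castSucc, Fin.snoc_castSucc, Fin.snoc_last, Fin.init]
    ring
  have hint : Integrable (fun p => F (e.symm p)) (μI.prod (Measure.pi fun _ => μI)) :=
    Integrable.of_bound
      ((hf.mul (measurable_haarFn _ j m)).comp e.symm.measurable).aestronglyMeasurable B
      (ae_of_all _ fun p => abs_mul_haarFn_le hB j m _)
  calc haarCoeff (d + 1) f j m = ∫ x, F x ∂(Measure.pi fun _ => μI) := by
        rw [haarCoeff, volume_restrict_unitCube]
    _ = ∫ p, F (e.symm p) ∂(μI.prod (Measure.pi fun _ => μI)) := by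
        rw [← he.integral_comp']
        simp_rw [e.symm_apply_apply]
    _ = _ := by
        rw [integral_prod _ hint]
        simp_rw [hsymm, hF, haarCoeff, volume_restrict_unitCube, integral_mul_const]
        rfl

theorem measurable_haarCoeff_slice (hf : Measurable f) (j : Fin d → ℤ) (m : Fin d → ℕ) :
    Measurable fun t => haarCoeff d (fun y => f (Fin.snoc y t)) j m := by
  have hsnoc : Measurable fun p : ℝ × (Fin d → ℝ) => (Fin.snoc p.2 p.1 : Fin (d + 1) → ℝ) :=
    (continuous_snd.finSnoc continuous_fst).measurable
  exact (((hf.comp hsnoc).mul ((measurable_haarFn d j m).comp measurable_snd)).stronglyMeasurable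
    |>.integral_prod_right' (ν := volume.restrict (unitCube d))).measurable

theorem memLp_haarCoeff_slice (hf : Measurable f) {B : ℝ} (hB : ∀ x, |f x| ≤ B)
    (j : Fin d → ℤ) (m : Fin d → ℕ) :
    MemLp (fun t => haarCoeff d (fun y => f (Fin.snoc y t)) j m) 2
      (volume.restrict (Icc (0:ℝ) 1)) :=
  MemLp.of_bound (measurable_haarCoeff_slice hf j m).aestronglyMeasurable B
    (ae_of_all _ fun _ => (Real.norm_eq_abs _).trans_le (abs_haarCoeff_le (fun _ => hB _) j m))

theorem dNormSq_succ :
    dNormSq (d + 1) f = ∑' j : Fin d → ℕ, ∑ m ∈ Dfin0 d j,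
      ENNReal.ofReal (2 ^ ∑ i, j i) * ∑' k : ℕ, ∑ n ∈ Finset.range (2 ^ k),
        ENNReal.ofReal (2 ^ k * haarCoeff (d + 1) f (Fin.snoc (fun i => (j i : ℤ)) k)
          (Fin.snoc m n) ^ 2) := by
  rw [dNormSq, ← (Fin.snocEquiv fun _ => ℕ).tsum_eq, ENNReal.tsum_prod', ENNReal.tsum_comm]
  refine tsum_congr fun j => ?_
  simp_rw [← ENNReal.tsum_mul_left, Finset.mul_sum]
  rw [← Summable.tsum_finsetSum (fun _ _ => ENNReal.summable)]
  refine tsum_congr fun k => ?_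
  have hsnoc : (Fin.snocEquiv fun _ => ℕ) (k, j) = Fin.snoc j k := rfl
  rw [Dfin0, Dfin0, hsnoc, Fintype.sum_piFinset_succ, Finset.sum_comm]
  have hidx : (fun i => ((Fin.snoc j k : Fin (d + 1) → ℕ) i : ℤ)) =
      Fin.snoc (fun i => (j i : ℤ)) k :=
    Fin.comp_snoc _ j k
  simp only [Fin.snoc_castSucc, Fin.snoc_last, Fin.sum_univ_castSucc, pow_add, hidx, mul_assoc,
    ENNReal.ofReal_mul (by positivity : (0:ℝ) ≤ 2 ^ ∑ i, j i)]

theorem dNormSq_succ_le_lintegral (hf : Measurable f) {B : ℝ} (hB : ∀ x, |f x| ≤ B) :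
    dNormSq (d + 1) f ≤ ∫⁻ t in Icc (0:ℝ) 1, dNormSq d (fun y => f (Fin.snoc y t)) := by
  set c := fun (j : Fin d → ℕ) (m : Fin d → ℕ) (t : ℝ) =>
    haarCoeff d (fun y => f (Fin.snoc y t)) (fun i => (j i : ℤ)) m
  have hc : ∀ j m, Measurable fun t => c j m t ^ 2 :=
    fun j m => (measurable_haarCoeff_slice hf _ m).pow_const 2
  calc dNormSq (d + 1) f
      = ∑' j : Fin d → ℕ, ∑ m ∈ Dfin0 d j, ENNReal.ofReal (2 ^ ∑ i, j i) *
          ∑' k : ℕ, ∑ n ∈ Finset.range (2 ^ k),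
            ENNReal.ofReal (2 ^ k * (∫ t in Icc (0:ℝ) 1, c j m t * haar1 k n t) ^ 2) := by
        simp_rw [dNormSq_succ, haarCoeff_succ hf hB, Fin.init_snoc, Fin.snoc_last, c]
    _ ≤ ∑' j : Fin d → ℕ, ∑ m ∈ Dfin0 d j, ENNReal.ofReal (2 ^ ∑ i, j i) *
          ∫⁻ t in Icc (0:ℝ) 1, ENNReal.ofReal (c j m t ^ 2) := by
        gcongr with j m
        exact tsum_haarCoeff_sq_le (memLp_haarCoeff_slice hf hB _ m)
    _ = ∑' j : Fin d → ℕ, ∫⁻ t in Icc (0:ℝ) 1, ∑ m ∈ Dfin0 d j,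
          ENNReal.ofReal (2 ^ (∑ i, j i) * c j m t ^ 2) := by
        refine tsum_congr fun j => ?_
        rw [lintegral_finsetSum _ fun m _ => ((hc j m).const_mul _).ennreal_ofReal]
        refine Finset.sum_congr rfl fun m _ => ?_
        rw [← lintegral_const_mul _ (hc j m).ennreal_ofReal]
        simp_rw [← ENNReal.ofReal_mul (by positivity : (0:ℝ) ≤ 2 ^ ∑ i, j i)]
    _ = ∫⁻ t in Icc (0:ℝ) 1, dNormSq d (fun y => f (Fin.snoc y t)) :=
        (lintegral_tsum fun j => (Finset.measurable_sum _ fun m _ =>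
          ((hc j m).const_mul _).ennreal_ofReal).aemeasurable).symm

end Slice

theorem dNorm_le_iff (d : ℕ) (f : (Fin d → ℝ) → ℝ) (S : ℝ≥0∞) :
    dNorm d f ≤ S ↔ dNormSq d f ≤ S ^ (2 : ℝ) := by
  rw [dNorm, one_div]
  exact ENNReal.rpow_inv_le_iff two_pos

theorem dnorm_slice_general (d : ℕ) (f : (Fin (d+1) → ℝ) → ℝ)
    (hmeas : Measurable f) (hbd : ∃ B : ℝ, ∀ x, |f x| ≤ B) :
    dNorm (d+1) f ≤ ⨆ t : Set.Icc (0:ℝ) 1, dNorm d (fun y => f (Fin.snoc y (t:ℝ))) := by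
  obtain ⟨B, hB⟩ := hbd
  set S := ⨆ t : Set.Icc (0:ℝ) 1, dNorm d (fun y => f (Fin.snoc y (t:ℝ)))
  have hslice : ∀ t ∈ Icc (0:ℝ) 1, dNormSq d (fun y => f (Fin.snoc y t)) ≤ S ^ (2 : ℝ) :=
    fun t ht => (dNorm_le_iff _ _ _).1 (le_iSup_of_le ⟨t, ht⟩ le_rfl)
  rw [dNorm_le_iff]
  calc dNormSq (d + 1) f ≤ ∫⁻ t in Icc (0:ℝ) 1, dNormSq d (fun y => f (Fin.snoc y t)) :=
        dNormSq_succ_le_lintegral hmeas hB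
    _ ≤ ∫⁻ _ in Icc (0:ℝ) 1, S ^ (2 : ℝ) := setLIntegral_mono' measurableSet_Icc hslice
    _ = S ^ (2 : ℝ) := by simp

/-- For a bounded measurable `f : [0,1]^{d+1} → ℝ`,
`‖f | 𝒟₀^{d+1}‖ ≤ sup_{t ∈ [0,1]} ‖f(·,t) | 𝒟₀^d‖`. -/
theorem dnorm_slice (d : ℕ) (hd : 0 < d) (f : (Fin (d+1) → ℝ) → ℝ)
    (hmeas : Measurable f) (hbd : ∃ B : ℝ, ∀ x, |f x| ≤ B) :
    dNorm (d+1) f ≤ ⨆ t : Set.Icc (0:ℝ) 1, dNorm d (fun y => f (Fin.snoc y (t:ℝ))) :=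
  dnorm_slice_general d f hmeas hbd

end
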